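/- Let q : ℝ² → 𝕋² be the quotient map onto the flat two-dimensional torus and let (α,β) ∈ ℝ² be nonzero. If the image q({t·(α,β) : t ∈ ℝ}) of the line through the origin with direction (α,β) is a closed subset of 𝕋², then the line ℝ·(α,β) contains a nonzero point of ℤ²; that is, there exist a nonzero (p,k) ∈ ℤ² and s ∈ ℝ with (p,k) = s·(α,β). -/

import Mathlib

/-!
The line `ℝ v` is the kernel of the functional `wedge v x = v₀ x₁ - v₁ x₀`, so the preimage in
`ℝ²` of its image in the torus is `ℝ v + ℤ² = (wedge v)⁻¹ (wedge v (ℤ²))`. As `wedge v` is a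
quotient map, closedness of the image in the torus makes the subgroup `wedge v (ℤ²) = ℤ v₀ + ℤ v₁`
of `ℝ` closed; being countable it is not dense, hence cyclic, equal to `ℤ a` with `a ≠ 0`. Both
coordinates of `v` are then integer multiples of `a`, and `a⁻¹ v` is the required lattice point.
-/

noncomputable section

/-- The integer lattice `ℤ^N` inside Euclidean space `ℝ^N`. -/
abbrev torusLattice (N : ℕ) : AddSubgroup (EuclideanSpace ℝ (Fin N)) :=
  (Submodule.span ℤ (Set.range ((EuclideanSpace.basisFun (Fin N) ℝ).toBasis))).toAddSubgroup

instance (N : ℕ) : IsClosed ((torusLattice N : Set (EuclideanSpace ℝ (Fin N)))) :=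
  AddSubgroup.isClosed_of_discrete

/-- The flat torus `𝕋^N = ℝ^N / ℤ^N`, equipped with the quotient metric. -/
abbrev Torus (N : ℕ) := EuclideanSpace ℝ (Fin N) ⧸ torusLattice N

/-- The canonical quotient map `ℝ^N → 𝕋^N`. -/
abbrev torusQuot (N : ℕ) : EuclideanSpace ℝ (Fin N) → Torus N := QuotientAddGroup.mk

theorem AddSubgroup.exists_eq_zmultiples_of_isClosed_of_countable (S : AddSubgroup ℝ)
    (hclosed : IsClosed (S : Set ℝ)) (hcount : (S : Set ℝ).Countable) :
    ∃ a, S = AddSubgroup.zmultiples a := by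
  simp_rw [AddSubgroup.zmultiples_eq_closure]
  refine S.dense_or_cyclic.resolve_left fun hdense => Cardinal.not_countable_real ?_
  rwa [← hclosed.closure_eq, hdense.closure_eq] at hcount

theorem QuotientAddGroup.preimage_image_mk_ker {E F : Type*} [AddCommGroup E] [AddGroup F]
    (Λ : AddSubgroup E) (f : E →+ F) :
    (QuotientAddGroup.mk : E → E ⧸ Λ) ⁻¹' (QuotientAddGroup.mk '' (f.ker : Set E)) =
      f ⁻¹' (f '' Λ) := by
  ext x
  simp only [Set.mem_preimage, Set.mem_image, SetLike.mem_coe, AddMonoidHom.mem_ker,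
    QuotientAddGroup.eq_iff_sub_mem]
  constructor
  · rintro ⟨y, hy, hxy⟩
    exact ⟨x - y, by simpa using Λ.neg_mem hxy, by simp [hy]⟩
  · rintro ⟨l, hl, hfl⟩
    exact ⟨x - l, by simp [hfl], by simpa using hl⟩

theorem isClosed_image_of_isClosed_image_mk_ker {E F : Type*} [AddCommGroup E] [AddGroup F]
    [TopologicalSpace E] [TopologicalSpace F] {Λ : AddSubgroup E} {f : E →+ F}
    (hf : Topology.IsQuotientMap f)
    (h : IsClosed ((QuotientAddGroup.mk : E → E ⧸ Λ) '' (f.ker : Set E))) :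
    IsClosed (f '' Λ) := by
  rw [← hf.isClosed_preimage, ← QuotientAddGroup.preimage_image_mk_ker]
  exact h.preimage continuous_quot_mk

theorem mem_torusLattice_iff {N : ℕ} (w : EuclideanSpace ℝ (Fin N)) :
    w ∈ torusLattice N ↔ ∀ i, ∃ z : ℤ, (z : ℝ) = w i := by
  change w ∈ Submodule.span ℤ (Set.range (EuclideanSpace.basisFun (Fin N) ℝ).toBasis) ↔ _
  rw [Module.Basis.mem_span_iff_repr_mem]
  simp

theorem countable_torusLattice (N : ℕ) :
    (torusLattice N : Set (EuclideanSpace ℝ (Fin N))).Countable := by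
  refine (Set.countable_range fun z : Fin N → ℤ =>
    (WithLp.equiv 2 (Fin N → ℝ)).symm fun i => (z i : ℝ)).mono fun w hw => ?_
  choose z hz using (mem_torusLattice_iff w).1 hw
  exact ⟨z, by ext i; simp [hz]⟩

theorem inv_smul_mem_torusLattice {N : ℕ} {v : EuclideanSpace ℝ (Fin N)} {a : ℝ}
    (hv : ∀ i, v i ∈ AddSubgroup.zmultiples a) : a⁻¹ • v ∈ torusLattice N := by
  rcases eq_or_ne a 0 with rfl | ha
  · simp [zero_mem]
  refine (mem_torusLattice_iff _).2 fun i => ?_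
  obtain ⟨z, hz⟩ := AddSubgroup.mem_zmultiples_iff.1 (hv i)
  exact ⟨z, by simp only [PiLp.smul_apply, ← hz, zsmul_eq_mul, smul_eq_mul]; field_simp⟩

theorem EuclideanSpace.ne_zero_iff_two {v : EuclideanSpace ℝ (Fin 2)} :
    v ≠ 0 ↔ v 0 ≠ 0 ∨ v 1 ≠ 0 := by
  rw [Ne, ← not_and_or, not_iff_not]
  constructor
  · rintro rfl; simp
  · rintro ⟨h0, h1⟩; ext i; fin_cases i <;> simp [h0, h1]

def wedge (v : EuclideanSpace ℝ (Fin 2)) : EuclideanSpace ℝ (Fin 2) →L[ℝ] ℝ :=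
  v 0 • EuclideanSpace.proj 1 - v 1 • EuclideanSpace.proj 0

@[simp]
theorem wedge_apply (v x : EuclideanSpace ℝ (Fin 2)) : wedge v x = v 0 * x 1 - v 1 * x 0 := by
  simp [wedge]

theorem wedge_eq_zero_iff {v : EuclideanSpace ℝ (Fin 2)} (hv : v ≠ 0)
    (x : EuclideanSpace ℝ (Fin 2)) : wedge v x = 0 ↔ ∃ t : ℝ, t • v = x := by
  constructor
  · intro hx
    rw [wedge_apply, sub_eq_zero] at hx
    rcases EuclideanSpace.ne_zero_iff_two.1 hv with h0 | h1
    · refine ⟨x 0 / v 0, ?_⟩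
      ext i; fin_cases i <;> simp only [Fin.zero_eta, Fin.mk_one, PiLp.smul_apply, smul_eq_mul]
        <;> field_simp; linarith
    · refine ⟨x 1 / v 1, ?_⟩
      ext i; fin_cases i <;> simp only [Fin.zero_eta, Fin.mk_one, PiLp.smul_apply, smul_eq_mul]
        <;> field_simp; linarith
  · rintro ⟨t, rfl⟩
    simp only [wedge_apply, PiLp.smul_apply, smul_eq_mul]
    ring

theorem wedge_surjective {v : EuclideanSpace ℝ (Fin 2)} (hv : v ≠ 0) :
    Function.Surjective (wedge v) := by
  intro r
  have hpos : 0 < v 0 ^ 2 + v 1 ^ 2 := by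
    rcases EuclideanSpace.ne_zero_iff_two.1 hv with h | h <;> positivity
  refine ⟨(r / (v 0 ^ 2 + v 1 ^ 2)) • (WithLp.equiv 2 (Fin 2 → ℝ)).symm ![-v 1, v 0], ?_⟩
  simp only [WithLp.equiv_symm_apply, map_smul, wedge_apply, Matrix.cons_val_one,
    Matrix.cons_val_fin_one, Matrix.cons_val_zero, smul_eq_mul]
  field_simp
  ring

theorem isQuotientMap_wedge {v : EuclideanSpace ℝ (Fin 2)} (hv : v ≠ 0) :
    Topology.IsQuotientMap (wedge v) :=
  ((wedge v).isOpenMap (wedge_surjective hv)).isQuotientMap (wedge v).continuous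
    (wedge_surjective hv)

theorem apply_mem_map_wedge_torusLattice (v : EuclideanSpace ℝ (Fin 2)) (i : Fin 2) :
    v i ∈ (torusLattice 2).map (wedge v : EuclideanSpace ℝ (Fin 2) →+ ℝ) := by
  have hsingle : ∀ j, EuclideanSpace.single j 1 ∈ torusLattice 2 :=
    fun j => Submodule.subset_span ⟨j, by simp⟩
  fin_cases i
  · exact ⟨_, hsingle 1, by simp⟩
  · exact ⟨_, neg_mem (hsingle 0), by simp⟩

/-- Let `(α, β) ∈ ℝ²` be nonzero. If the image in the flat torus `𝕋²` of the line through the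
origin with direction `(α, β)` is closed, then that line contains a nonzero integer point:
there exist a nonzero `(p, k) ∈ ℤ²` and `s ∈ ℝ` with `(p, k) = s • (α, β)`. -/
theorem closed_line_image_contains_integer_point
    (α β : ℝ) (hαβ : (α, β) ≠ (0, 0))
    (v : EuclideanSpace ℝ (Fin 2))
    (hv : v = (WithLp.equiv 2 (Fin 2 → ℝ)).symm ![α, β])
    (hclosed : IsClosed (torusQuot 2 '' (Set.range fun t : ℝ => t • v))) :
    ∃ (p k : ℤ) (s : ℝ), (p, k) ≠ (0, 0) ∧
      (WithLp.equiv 2 (Fin 2 → ℝ)).symm ![(p : ℝ), (k : ℝ)] = s • v := by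
  have hv0 : v ≠ 0 := by
    rw [EuclideanSpace.ne_zero_iff_two]
    simpa [hv, or_iff_not_imp_left] using hαβ
  set f : EuclideanSpace ℝ (Fin 2) →+ ℝ := ↑(wedge v)
  have hline : Set.range (fun t : ℝ => t • v) = (f.ker : Set (EuclideanSpace ℝ (Fin 2))) := by
    ext x; exact (wedge_eq_zero_iff hv0 x).symm
  obtain ⟨a, ha⟩ := AddSubgroup.exists_eq_zmultiples_of_isClosed_of_countable
    ((torusLattice 2).map f)
    (isClosed_image_of_isClosed_image_mk_ker (isQuotientMap_wedge hv0) (hline ▸ hclosed))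
    ((countable_torusLattice 2).image f)
  have hcoord : ∀ i, v i ∈ AddSubgroup.zmultiples a :=
    fun i => ha ▸ apply_mem_map_wedge_torusLattice v i
  have ha0 : a ≠ 0 := by
    rintro rfl
    exact hv0 (by ext i; simpa using hcoord i)
  choose z hz using (mem_torusLattice_iff _).1 (inv_smul_mem_torusLattice hcoord)
  have hw : (WithLp.equiv 2 (Fin 2 → ℝ)).symm ![(z 0 : ℝ), (z 1 : ℝ)] = a⁻¹ • v := by
    ext i; fin_cases i <;> simp [hz]
  refine ⟨z 0, z 1, a⁻¹, fun h => smul_ne_zero (inv_ne_zero ha0) hv0 ?_, hw⟩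
  simp only [Prod.mk.injEq] at h
  simp [← hw, h.1, h.2]

end
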